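/- arXiv:2605.14254 — 6 statements merged into one kernel-verified Lean document; each statement's English description precedes it below -/
import Mathlib

section
/- For every real number x and every λ > 0, the integral over r from 0 to ∞ of the Gaussian density p(r, x, λr) = (1/√(2πr))·exp(−(x−λr)²/(2r)) equals exp(−λ(|x|−x))/λ. -/
open MeasureTheory Real

/-- Gaussian density with variance `t` and mean `m`, evaluated at `x`. -/
noncomputable def gaussDensity (t x m : ℝ) : ℝ :=
  Real.exp (-(x - m) ^ 2 / (2 * t)) / Real.sqrt (2 * Real.pi * t)

/-!
Substituting `r = t²` turns the integral into a constant multiple of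
`∫₀^∞ exp (-(p t - q / t)²) dt` with `p = λ / √2`, `q = |x| / √2`, after completing the square
`(x - λ t²)² / (2 t²) = (p t - q / t)² + λ (|x| - x)`. The latter integral is `√π / (2 p)` by the
Cauchy–Schlömilch substitution `u = p t - q / t`: it maps `(0, ∞)` onto `ℝ` with Jacobian
`p + q / t²`, and the reflection `t ↦ q / (p t)` shows that both summands of the Jacobian
contribute equally for an even integrand.
-/

open Set

section CauchySchlomilch

variable {E : Type*} [NormedAddCommGroup E] [NormedSpace ℝ E] {p q : ℝ}

theorem integral_comp_div_Ioi (g : ℝ → E) {c : ℝ} (hc : 0 < c) :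
    ∫ t in Ioi 0, (c / t ^ 2) • g (c / t) = ∫ t in Ioi 0, g t := by
  have himg : (c / ·) '' Ioi 0 = Ioi (0 : ℝ) := by
    ext y
    refine ⟨?_, fun hy => ⟨c / y, div_pos hc hy, div_div_cancel₀ hc.ne'⟩⟩
    rintro ⟨t, ht, rfl⟩
    exact div_pos hc ht
  have hderiv : ∀ t ∈ Ioi (0 : ℝ), HasDerivWithinAt (c / ·) (-(c / t ^ 2)) (Ioi 0) t := by
    intro t ht
    simpa [div_eq_mul_inv] using ((hasDerivAt_inv (ne_of_gt ht)).const_mul c).hasDerivWithinAt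
  have hinj : InjOn (c / ·) (Ioi (0 : ℝ)) := fun t₁ _ t₂ _ h =>
    inv_injective (mul_left_cancel₀ hc.ne' h)
  conv_rhs => rw [← himg, integral_image_eq_integral_abs_deriv_smul measurableSet_Ioi hderiv hinj]
  refine setIntegral_congr_fun measurableSet_Ioi fun t ht => ?_
  rw [abs_neg, abs_of_pos (div_pos hc (pow_pos (mem_Ioi.mp ht) 2))]

theorem hasDerivAt_mul_sub_div {t : ℝ} (ht : t ≠ 0) :
    HasDerivAt (fun t => p * t - q / t) (p + q / t ^ 2) t := by
  have hinv : HasDerivAt (q / ·) (-(q / t ^ 2)) t := by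
    simpa [div_eq_mul_inv] using (hasDerivAt_inv ht).const_mul q
  simpa using ((hasDerivAt_id' t).const_mul p).fun_sub hinv

theorem strictMonoOn_mul_sub_div (hp : 0 < p) (hq : 0 ≤ q) :
    StrictMonoOn (fun t => p * t - q / t) (Ioi 0) := by
  intro t₁ ht₁ t₂ _ h
  have := div_le_div_of_nonneg_left hq ht₁ h.le
  dsimp only
  nlinarith

theorem image_mul_sub_div_Ioi (hp : 0 < p) (hq : 0 < q) :
    (fun t => p * t - q / t) '' Ioi 0 = univ := by
  refine eq_univ_of_forall fun y => ?_
  set D := √(y ^ 2 + 4 * p * q)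
  have hD : D ^ 2 = y ^ 2 + 4 * p * q := sq_sqrt (by positivity)
  have hyD : 0 < y + D := by
    have : |y| < D := by
      rw [← sqrt_sq_eq_abs]
      exact sqrt_lt_sqrt (sq_nonneg y) (by nlinarith)
    linarith [neg_abs_le y]
  -- the positive root of `p t² - y t - q = 0`
  refine ⟨(y + D) / (2 * p), div_pos hyD (by positivity), ?_⟩
  field_simp
  linear_combination hD

theorem integrableOn_Ioi_of_add_div_sq_smul {h : ℝ → E} (hp : 0 < p) (hq : 0 ≤ q)
    (hint : IntegrableOn (fun t => (p + q / t ^ 2) • h t) (Ioi 0)) :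
    IntegrableOn h (Ioi 0) := by
  have hcont : ContinuousOn (fun t : ℝ => (p + q / t ^ 2)⁻¹) (Ioi 0) := by
    refine (continuousOn_const.add ?_).inv₀ fun t _ =>
      (add_pos_of_pos_of_nonneg hp (div_nonneg hq (sq_nonneg t))).ne'
    exact continuousOn_const.div (continuous_pow 2).continuousOn
      fun t ht => pow_ne_zero 2 (ne_of_gt ht)
  have hbound : ∀ᵐ t ∂volume.restrict (Ioi 0), ‖(p + q / t ^ 2)⁻¹‖ ≤ p⁻¹ := by
    refine (ae_restrict_iff' measurableSet_Ioi).2 (.of_forall fun t ht => ?_)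
    have : (0 : ℝ) < t := ht
    rw [norm_inv, norm_of_nonneg (by positivity)]
    exact inv_anti₀ hp (by simp only [le_add_iff_nonneg_right]; positivity)
  refine IntegrableOn.congr_fun
    (hint.bdd_smul p⁻¹ (hcont.aestronglyMeasurable measurableSet_Ioi) hbound)
    (fun t ht => ?_) measurableSet_Ioi
  have : (0 : ℝ) < t := ht
  rw [Pi.smul_apply', smul_smul, inv_mul_cancel₀ (by positivity), one_smul]

/-- The reflection `t ↦ q / (p t)` reverses the sign of `p t - q / t`. -/
theorem integral_div_sq_smul_comp_mul_sub_div_Ioi {g : ℝ → E} (hg_even : ∀ u, g (-u) = g u)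
    (hp : 0 < p) (hq : 0 < q) :
    ∫ t in Ioi 0, (q / t ^ 2) • g (p * t - q / t) = ∫ t in Ioi 0, p • g (p * t - q / t) := by
  rw [← integral_comp_div_Ioi (fun t => p • g (p * t - q / t)) (div_pos hq hp)]
  refine setIntegral_congr_fun measurableSet_Ioi fun t ht => ?_
  have : (0 : ℝ) < t := ht
  have hreflect : p * (q / p / t) - q / (q / p / t) = -(p * t - q / t) := by
    field_simp
    ring
  rw [hreflect, hg_even, smul_smul]
  congr 1
  field_simp

theorem integral_comp_mul_sub_div_Ioi {g : ℝ → E} (hg : Integrable g)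
    (hg_even : ∀ u, g (-u) = g u) (hp : 0 < p) (hq : 0 < q) :
    ∫ t in Ioi 0, g (p * t - q / t) = (2 * p)⁻¹ • ∫ u, g u := by
  have hderiv : ∀ t ∈ Ioi (0 : ℝ),
      HasDerivWithinAt (fun t => p * t - q / t) (p + q / t ^ 2) (Ioi 0) t := fun t ht =>
    (hasDerivAt_mul_sub_div (ne_of_gt ht)).hasDerivWithinAt
  have hinj := (strictMonoOn_mul_sub_div hp hq.le).injOn
  have habs : ∀ t ∈ Ioi (0 : ℝ), |p + q / t ^ 2| = p + q / t ^ 2 := fun t ht =>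
    abs_of_pos (by have : (0 : ℝ) < t := ht; positivity)
  have hchange : ∫ u, g u = ∫ t in Ioi 0, (p + q / t ^ 2) • g (p * t - q / t) := by
    rw [← setIntegral_univ, ← image_mul_sub_div_Ioi hp hq,
      integral_image_eq_integral_abs_deriv_smul measurableSet_Ioi hderiv hinj]
    exact setIntegral_congr_fun measurableSet_Ioi fun t ht => by rw [habs t ht]
  have hint : IntegrableOn (fun t => (p + q / t ^ 2) • g (p * t - q / t)) (Ioi 0) := by
    refine IntegrableOn.congr_fun (f := fun t => |p + q / t ^ 2| • g (p * t - q / t)) ?_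
      (fun t ht => by simp only [habs t ht]) measurableSet_Ioi
    rw [← integrableOn_image_iff_integrableOn_abs_deriv_smul measurableSet_Ioi hderiv hinj,
      image_mul_sub_div_Ioi hp hq]
    exact hg.integrableOn
  have hint_p : IntegrableOn (fun t => p • g (p * t - q / t)) (Ioi 0) :=
    (integrableOn_Ioi_of_add_div_sq_smul hp hq.le hint).smul p
  have hint_q : IntegrableOn (fun t => (q / t ^ 2) • g (p * t - q / t)) (Ioi 0) :=
    (hint.sub hint_p).congr_fun
      (fun t _ => by simp only [Pi.sub_apply, add_smul, add_sub_cancel_left]) measurableSet_Ioi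
  calc ∫ t in Ioi 0, g (p * t - q / t)
      = (2 * p)⁻¹ • ((2 * p) • ∫ t in Ioi 0, g (p * t - q / t)) := by
        rw [smul_smul, inv_mul_cancel₀ (by positivity), one_smul]
    _ = (2 * p)⁻¹ • ∫ u, g u := by
        simp only [hchange, add_smul]
        rw [integral_add hint_p hint_q, integral_div_sq_smul_comp_mul_sub_div_Ioi hg_even hp hq,
          integral_smul, ← add_smul, ← two_mul]

end CauchySchlomilch

theorem integral_exp_neg_sq_mul_sub_div_Ioi {p q : ℝ} (hp : 0 < p) (hq : 0 ≤ q) :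
    ∫ t in Ioi 0, exp (-(p * t - q / t) ^ 2) = √π / (2 * p) := by
  rcases hq.eq_or_lt with rfl | hq
  · have := integral_comp_mul_left_Ioi (fun u => exp (-1 * u ^ 2)) 0 hp
    simp only [mul_zero, integral_gaussian_Ioi, div_one] at this
    simp only [zero_div, sub_zero, ← neg_one_mul (_ ^ 2)]
    rw [this, smul_eq_mul]
    field_simp
  · have hgauss := integral_gaussian 1
    simp only [neg_one_mul, div_one] at hgauss
    rw [integral_comp_mul_sub_div_Ioi (g := fun u => exp (-u ^ 2)) ?_ (fun u => by simp) hp hq,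
      hgauss, smul_eq_mul]
    · field_simp
    · simpa using integrable_exp_neg_mul_sq one_pos

theorem two_mul_mul_gaussDensity_sq {x lam t : ℝ} (ht : 0 < t) :
    2 * t * gaussDensity (t ^ 2) x (lam * t ^ 2)
      = 2 * exp (-lam * (|x| - x)) / √(2 * π) *
          exp (-(lam / √2 * t - |x| / √2 / t) ^ 2) := by
  have hsqrt : √(2 * π * t ^ 2) = √(2 * π) * t := by
    rw [sqrt_mul (by positivity), sqrt_sq ht.le]
  have hexp : -(x - lam * t ^ 2) ^ 2 / (2 * t ^ 2)
      = -lam * (|x| - x) + -(lam / √2 * t - |x| / √2 / t) ^ 2 := by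
    rw [show lam / √2 * t - |x| / √2 / t = (lam * t - |x| / t) / √2 by ring, div_pow,
      sq_sqrt zero_le_two]
    field_simp
    linear_combination sq_abs x
  rw [gaussDensity, hsqrt, hexp, exp_add]
  field_simp

theorem stmt_0 (x lam : ℝ) (hlam : 0 < lam) :
    ∫ r in Set.Ioi (0 : ℝ), gaussDensity r x (lam * r) =
      Real.exp (-lam * (|x| - x)) / lam := by
  rw [← integral_comp_rpow_Ioi_of_pos two_pos]
  have hsub : ∀ t ∈ Ioi (0 : ℝ),
      ((2 : ℝ) * t ^ ((2 : ℝ) - 1)) • gaussDensity (t ^ (2 : ℝ)) x (lam * t ^ (2 : ℝ))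
        = 2 * exp (-lam * (|x| - x)) / √(2 * π) *
            exp (-(lam / √2 * t - |x| / √2 / t) ^ 2) := fun t ht => by
    rw [show (2 : ℝ) - 1 = 1 by norm_num, rpow_one, rpow_two, smul_eq_mul]
    exact two_mul_mul_gaussDensity_sq ht
  rw [setIntegral_congr_fun measurableSet_Ioi hsub, integral_const_mul,
    integral_exp_neg_sq_mul_sub_div_Ioi (by positivity) (by positivity), sqrt_mul zero_le_two]
  field_simp
end

section
/- Let λ > 0 and z > 0, and let σ be a random variable with density r ↦ λ·p(r, z, λr) on (0,∞), where p(r,z,λr) = (2πr)^{-1/2} exp(−(z−λr)²/(2r)). Then this density integrates to 1, i.e. λ·∫_0^∞ p(r, z, λr) dr = 1. -/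
/-!
The integrand `λ p(r, z, λr)` is the derivative on `(0, ∞)` of the inverse Gaussian distribution
function `F(r) = Φ(λ√r - z/√r) - e^{2λz} Φ(-λ√r - z/√r)`, where `Φ` is the standard normal
distribution function: the two Gaussian densities produced by the chain rule coincide up to the
factor `e^{2λz}`, so their contributions combine into `φ(λ√r - z/√r) λ/√r`. Since `z > 0` both
arguments of `Φ` tend to `-∞` as `r → 0⁺`, so `F(0⁺) = 0`, and since `λ > 0`, `F(∞) = 1`.
-/

open MeasureTheory Real

open Set Filter Topology ProbabilityTheory

theorem hasDerivAt_integral_Iic {f : ℝ → ℝ} {x : ℝ} (hf : Integrable f) (hfx : ContinuousAt f x) :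
    HasDerivAt (fun u ↦ ∫ t in Iic u, f t) (f x) x := by
  have hsplit : (fun u ↦ ∫ t in Iic u, f t) = fun u ↦ (∫ t in Iic x, f t) + ∫ t in x..u, f t := by
    funext u
    rw [← intervalIntegral.integral_Iic_sub_Iic hf.integrableOn hf.integrableOn]
    ring
  rw [hsplit]
  exact (intervalIntegral.integral_hasDerivAt_right hf.intervalIntegrable
    hf.aestronglyMeasurable.stronglyMeasurableAtFilter hfx).const_add _

theorem continuous_gaussianPDFReal (μ : ℝ) (v : NNReal) : Continuous (gaussianPDFReal μ v) := by
  rw [gaussianPDFReal_def]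
  fun_prop

theorem cdf_gaussianReal_eq_integral (μ : ℝ) {v : NNReal} (hv : v ≠ 0) (x : ℝ) :
    cdf (gaussianReal μ v) x = ∫ t in Iic x, gaussianPDFReal μ v t := by
  rw [cdf_eq_real, measureReal_def, gaussianReal_apply_eq_integral μ hv,
    ENNReal.toReal_ofReal (setIntegral_nonneg measurableSet_Iic
      fun t _ ↦ gaussianPDFReal_nonneg μ v t)]

theorem hasDerivAt_cdf_gaussianReal (μ : ℝ) {v : NNReal} (hv : v ≠ 0) (x : ℝ) :
    HasDerivAt (cdf (gaussianReal μ v)) (gaussianPDFReal μ v x) x := by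
  rw [show ⇑(cdf (gaussianReal μ v)) = _ from funext (cdf_gaussianReal_eq_integral μ hv)]
  exact hasDerivAt_integral_Iic (integrable_gaussianPDFReal μ v)
    (continuous_gaussianPDFReal μ v).continuousAt

theorem exp_mul_gaussianPDFReal_neg_sub (a b : ℝ) :
    exp (2 * a * b) * gaussianPDFReal 0 1 (-a - b) = gaussianPDFReal 0 1 (a - b) := by
  simp only [gaussianPDFReal_def, NNReal.coe_one, mul_one, sub_zero]
  rw [mul_left_comm, ← exp_add]
  ring_nf

theorem gaussDensity_mul_eq_gaussianPDFReal {r : ℝ} (hr : 0 < r) (lam z : ℝ) :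
    gaussDensity r z (lam * r) = gaussianPDFReal 0 1 (lam * √r - z / √r) / √r := by
  obtain ⟨s, hs, rfl⟩ : ∃ s, 0 < s ∧ s ^ 2 = r := ⟨√r, sqrt_pos.2 hr, sq_sqrt hr.le⟩
  have hexp : -(z - lam * s ^ 2) ^ 2 / (2 * s ^ 2) = -(lam * s - z / s - 0) ^ 2 / (2 * 1) := by
    field_simp; ring
  rw [gaussDensity, gaussianPDFReal_def, sqrt_sq hs.le, NNReal.coe_one, hexp,
    sqrt_mul (by positivity), sqrt_sq hs.le, mul_one]
  field_simp

theorem hasDerivAt_mul_sqrt_sub_div_sqrt (a b : ℝ) {r : ℝ} (hr : 0 < r) :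
    HasDerivAt (fun t ↦ a * √t - b / √t) ((a + b / r) / (2 * √r)) r := by
  have hs : 0 < √r := sqrt_pos.2 hr
  have hsqrt := hasDerivAt_sqrt hr.ne'
  simp only [div_eq_mul_inv b]
  refine ((hsqrt.const_mul a).fun_sub ((hsqrt.fun_inv hs.ne').const_mul b)).congr_deriv ?_
  rw [sq_sqrt hr.le]; field_simp; ring

theorem tendsto_mul_sqrt_sub_div_sqrt_atTop {a : ℝ} (ha : 0 < a) (b : ℝ) :
    Tendsto (fun t ↦ a * √t - b / √t) atTop atTop := by
  have hsqrt : Tendsto (√·) atTop atTop := tendsto_sqrt_atTop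
  have hinv : Tendsto (fun t ↦ b / √t) atTop (𝓝 0) := by
    simpa [div_eq_mul_inv] using hsqrt.inv_tendsto_atTop.const_mul b
  simpa [sub_eq_add_neg] using (hsqrt.const_mul_atTop ha).atTop_add hinv.neg

theorem tendsto_mul_sqrt_sub_div_sqrt_nhdsGT_zero (a : ℝ) {b : ℝ} (hb : 0 < b) :
    Tendsto (fun t ↦ a * √t - b / √t) (𝓝[>] 0) atBot := by
  have hsqrt0 : Tendsto (√·) (𝓝[>] 0) (𝓝 0) :=
    (Real.continuous_sqrt.tendsto' 0 0 sqrt_zero).mono_left nhdsWithin_le_nhds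
  have hsqrt : Tendsto (√·) (𝓝[>] 0) (𝓝[>] 0) :=
    tendsto_nhdsWithin_iff.2 ⟨hsqrt0, eventually_nhdsWithin_of_forall fun t ht ↦ sqrt_pos.2 ht⟩
  have hlin : Tendsto (fun t ↦ a * √t) (𝓝[>] 0) (𝓝 0) := by
    simpa using hsqrt0.const_mul a
  have hinv : Tendsto (fun t ↦ b / √t) (𝓝[>] 0) atTop := by
    simpa [div_eq_mul_inv] using (tendsto_inv_nhdsGT_zero.comp hsqrt).const_mul_atTop hb
  simpa [sub_eq_add_neg] using hlin.add_atBot (tendsto_neg_atTop_atBot.comp hinv)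

local notation "Φ" => cdf (gaussianReal 0 1)

noncomputable def inverseGaussianCDF (lam z r : ℝ) : ℝ :=
  if 0 < r then Φ (lam * √r - z / √r) - exp (2 * lam * z) * Φ (-lam * √r - z / √r) else 0

theorem inverseGaussianCDF_eventuallyEq {lam z : ℝ} {l : Filter ℝ} (hl : ∀ᶠ r in l, 0 < r) :
    inverseGaussianCDF lam z =ᶠ[l]
      fun r ↦ Φ (lam * √r - z / √r) - exp (2 * lam * z) * Φ (-lam * √r - z / √r) := by
  filter_upwards [hl] with r hr using if_pos hr

theorem hasDerivAt_inverseGaussianCDF (lam z : ℝ) {r : ℝ} (hr : 0 < r) :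
    HasDerivAt (inverseGaussianCDF lam z) (lam * gaussDensity r z (lam * r)) r := by
  have hs : 0 < √r := sqrt_pos.2 hr
  have hΦ := hasDerivAt_cdf_gaussianReal 0 one_ne_zero
  have hu := (hΦ _).comp r (hasDerivAt_mul_sqrt_sub_div_sqrt lam z hr)
  have hv := (hΦ _).comp r (hasDerivAt_mul_sqrt_sub_div_sqrt (-lam) z hr)
  refine ((hu.fun_sub (hv.const_mul _)).congr_of_eventuallyEq
    (inverseGaussianCDF_eventuallyEq (Ioi_mem_nhds hr))).congr_deriv ?_
  have hsym := exp_mul_gaussianPDFReal_neg_sub (lam * √r) (z / √r)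
  rw [show 2 * (lam * √r) * (z / √r) = 2 * lam * z by field_simp] at hsym
  rw [gaussDensity_mul_eq_gaussianPDFReal hr, neg_mul, ← mul_assoc, hsym]
  field_simp
  ring

theorem continuousWithinAt_inverseGaussianCDF_zero (lam : ℝ) {z : ℝ} (hz : 0 < z) :
    ContinuousWithinAt (inverseGaussianCDF lam z) (Ici 0) 0 := by
  rw [← continuousWithinAt_Ioi_iff_Ici, ContinuousWithinAt,
    show inverseGaussianCDF lam z 0 = 0 - exp (2 * lam * z) * 0 by simp [inverseGaussianCDF]]
  refine Tendsto.congr' (inverseGaussianCDF_eventuallyEq self_mem_nhdsWithin).symm ?_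
  exact ((tendsto_cdf_atBot (μ := gaussianReal 0 1)).comp (tendsto_mul_sqrt_sub_div_sqrt_nhdsGT_zero lam hz)).sub
    (((tendsto_cdf_atBot (μ := gaussianReal 0 1)).comp (tendsto_mul_sqrt_sub_div_sqrt_nhdsGT_zero (-lam) hz)).const_mul _)

theorem tendsto_inverseGaussianCDF_atTop {lam : ℝ} (hlam : 0 < lam) (z : ℝ) :
    Tendsto (inverseGaussianCDF lam z) atTop (𝓝 1) := by
  have hv : Tendsto (fun r ↦ -lam * √r - z / √r) atTop atBot :=
    (tendsto_neg_atTop_atBot.comp (tendsto_mul_sqrt_sub_div_sqrt_atTop hlam (-z))).congr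
      fun r ↦ by simp only [Function.comp_apply]; ring
  rw [show (1 : ℝ) = 1 - exp (2 * lam * z) * 0 by ring]
  refine Tendsto.congr' (inverseGaussianCDF_eventuallyEq (Ioi_mem_atTop 0)).symm ?_
  exact ((tendsto_cdf_atTop (μ := gaussianReal 0 1)).comp (tendsto_mul_sqrt_sub_div_sqrt_atTop hlam z)).sub
    (((tendsto_cdf_atBot (μ := gaussianReal 0 1)).comp hv).const_mul _)

theorem stmt_3 (lam z : ℝ) (hlam : 0 < lam) (hz : 0 < z) :
    lam * ∫ r in Set.Ioi (0 : ℝ), gaussDensity r z (lam * r) = 1 := by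
  rw [← integral_const_mul, integral_Ioi_of_hasDerivAt_of_nonneg
    (continuousWithinAt_inverseGaussianCDF_zero lam hz)
    (fun r hr ↦ hasDerivAt_inverseGaussianCDF lam z hr)
    (fun r _ ↦ by unfold gaussDensity; positivity)
    (tendsto_inverseGaussianCDF_atTop hlam z)]
  simp [inverseGaussianCDF]
end

section
/- Let λ > 0, z > 0, and let σ have density λ·p(r,z,λr) on (0,∞). For y ≥ 0, define G(y) = λ·∫_0^∞ exp(−(y² + 2yz)/(2r))·p(r, z, λr) dr. Then G(y) = exp(−λy); that is, the law with tail function G is the exponential distribution with rate λ. -/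
/-!
Tilting by `exp (lam * z)` removes the drift, so the integral becomes
`exp (lam * z) * ∫ r, p_r(y + z) * exp (-lam ^ 2 r / 2)`, the resolvent of Brownian motion,
which equals `exp (-lam (y + z)) / lam`. After the substitution `r = s ^ 2` this resolvent
integral is a Gaussian integral in the variable `s - c / s` (with `c = (y + z) / lam`), and
Glasser's master theorem evaluates it: `s ↦ c / s` exchanges the two halves of the Jacobian
`1 + c / s ^ 2` of `s ↦ s - c / s`.
-/

open MeasureTheory Real

open Set

section Glasser

variable {E : Type*} [NormedAddCommGroup E] [NormedSpace ℝ E]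

theorem integral_Ioi_smul_comp_div {c : ℝ} (hc : 0 < c) (F : ℝ → E) :
    ∫ s in Ioi 0, (c / s ^ 2) • F (c / s) = ∫ s in Ioi 0, F s := by
  have hderiv : ∀ s ∈ Ioi (0 : ℝ),
      HasDerivWithinAt (fun s => c / s) (-(c / s ^ 2)) (Ioi 0) s := fun s hs => by
    simpa [div_eq_mul_inv] using ((hasDerivAt_inv (ne_of_gt hs)).const_mul c).hasDerivWithinAt
  have hinj : InjOn (fun s : ℝ => c / s) (Ioi 0) := fun s hs t ht hst =>
    inv_injective (mul_left_cancel₀ hc.ne' (by simpa [div_eq_mul_inv] using hst))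
  have himage : (fun s : ℝ => c / s) '' Ioi 0 = Ioi 0 :=
    Subset.antisymm (image_subset_iff.2 fun s (hs : 0 < s) => div_pos hc hs)
      fun t (ht : 0 < t) => ⟨c / t, div_pos hc ht, div_div_cancel₀ hc.ne'⟩
  conv_rhs =>
    rw [← himage, integral_image_eq_integral_abs_deriv_smul measurableSet_Ioi hderiv hinj F]
  refine setIntegral_congr_fun measurableSet_Ioi fun s (hs : 0 < s) => ?_
  rw [abs_neg, abs_of_pos (by positivity)]

theorem hasDerivAt_sub_div (c : ℝ) {s : ℝ} (hs : s ≠ 0) :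
    HasDerivAt (fun s => s - c / s) (1 + c / s ^ 2) s := by
  have h := (hasDerivAt_id' s).sub ((hasDerivAt_inv hs).const_mul c)
  simp only [← div_eq_mul_inv] at h
  exact h.congr_deriv (by ring)

theorem injOn_sub_div {c : ℝ} (hc : 0 ≤ c) : InjOn (fun s : ℝ => s - c / s) (Ioi 0) := by
  intro s (hs : 0 < s) t (ht : 0 < t) hst
  have : (s - t) * (s * t + c) = 0 := by
    simp only at hst
    field_simp at hst
    linear_combination hst
  have : 0 < s * t + c := by positivity
  nlinarith

theorem image_sub_div_Ioi {c : ℝ} (hc : 0 < c) : (fun s : ℝ => s - c / s) '' Ioi 0 = univ := by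
  refine eq_univ_of_forall fun w => ?_
  -- the positive root of `s ^ 2 - w s - c = 0`
  set D := √(w ^ 2 + 4 * c)
  have hD : D ^ 2 = w ^ 2 + 4 * c := sq_sqrt (by positivity)
  have hwD : |w| < D := by
    rw [← sqrt_sq_eq_abs]; exact sqrt_lt_sqrt (sq_nonneg w) (by linarith)
  have hpos : 0 < (w + D) / 2 := by linarith [neg_abs_le w]
  refine ⟨(w + D) / 2, hpos, ?_⟩
  have hroot : ((w + D) / 2) ^ 2 - w * ((w + D) / 2) - c = 0 := by linear_combination hD / 4
  have hne : w + D ≠ 0 := by linarith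
  field_simp
  linear_combination 4 * hroot

/-- Glasser's master theorem on the half-line, for even integrands. -/
theorem integral_Ioi_comp_sub_div_of_even {c : ℝ} (hc : 0 < c) {f : ℝ → E} (hf : Integrable f)
    (heven : ∀ x, f (-x) = f x) :
    ∫ s in Ioi 0, f (s - c / s) = (2 : ℝ)⁻¹ • ∫ x, f x := by
  set h : ℝ → E := fun s => (1 + c / s ^ 2) • f (s - c / s)
  have hderiv : ∀ s ∈ Ioi (0 : ℝ),
      HasDerivWithinAt (fun s => s - c / s) (1 + c / s ^ 2) (Ioi 0) s :=
    fun s hs => (hasDerivAt_sub_div c (ne_of_gt hs)).hasDerivWithinAt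
  have habs : ∀ s ∈ Ioi (0 : ℝ), |1 + c / s ^ 2| • f (s - c / s) = h s :=
    fun s (hs : 0 < s) => by rw [abs_of_pos (by positivity)]
  have hh_int : IntegrableOn h (Ioi 0) := by
    refine IntegrableOn.congr_fun ?_ habs measurableSet_Ioi
    rw [← integrableOn_image_iff_integrableOn_abs_deriv_smul measurableSet_Ioi hderiv
      (injOn_sub_div hc.le), image_sub_div_Ioi hc]
    exact hf.integrableOn
  have hh_integral : ∫ s in Ioi 0, h s = ∫ x, f x := by
    have := integral_image_eq_integral_abs_deriv_smul measurableSet_Ioi hderiv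
      (injOn_sub_div hc.le) f
    rw [image_sub_div_Ioi hc, setIntegral_univ,
      setIntegral_congr_fun measurableSet_Ioi habs] at this
    exact this.symm
  -- `s ↦ c / s` swaps the two pieces `f (s - c / s)` and `(c / s ^ 2) • f (s - c / s)` of `h`,
  -- which are integrable as bounded multiples of `h`.
  have hpiece :
      ∀ φ : ℝ → ℝ, Continuous φ → (∀ s, ‖φ s‖ ≤ 1) → IntegrableOn (φ • h) (Ioi 0) :=
    fun φ hφ hφ1 => hh_int.bdd_smul 1 hφ.aestronglyMeasurable (ae_of_all _ hφ1)
  have h₁ : IntegrableOn (fun s => f (s - c / s)) (Ioi 0) := by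
    refine (hpiece (fun s => s ^ 2 / (s ^ 2 + c)) ?_ fun s => ?_).congr_fun
      (fun s (hs : 0 < s) => ?_) measurableSet_Ioi
    · exact (continuous_pow 2).div (by fun_prop) fun s => by positivity
    · rw [norm_of_nonneg (by positivity), div_le_one (by positivity)]
      linarith
    · have : s ^ 2 / (s ^ 2 + c) * (1 + c / s ^ 2) = 1 := by field_simp
      simp only [h, Pi.smul_apply', smul_smul, this, one_smul]
  have h₂ : IntegrableOn (fun s => (c / s ^ 2) • f (s - c / s)) (Ioi 0) := by
    refine (hpiece (fun s => c / (s ^ 2 + c)) ?_ fun s => ?_).congr_fun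
      (fun s (hs : 0 < s) => ?_) measurableSet_Ioi
    · exact continuous_const.div (by fun_prop) fun s => by positivity
    · rw [norm_of_nonneg (by positivity), div_le_one (by positivity)]
      linarith [sq_nonneg s]
    · have : c / (s ^ 2 + c) * (1 + c / s ^ 2) = c / s ^ 2 := by field_simp
      simp only [h, Pi.smul_apply', smul_smul, this]
  have hswap : ∫ s in Ioi 0, (c / s ^ 2) • f (s - c / s) = ∫ s in Ioi 0, f (s - c / s) := by
    conv_rhs => rw [← integral_Ioi_smul_comp_div hc]
    refine setIntegral_congr_fun measurableSet_Ioi fun s (hs : 0 < s) => ?_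
    have : c / s - c / (c / s) = -(s - c / s) := by field_simp; ring
    simp only [this, heven]
  calc ∫ s in Ioi 0, f (s - c / s)
      = (2 : ℝ)⁻¹ •
          ((∫ s in Ioi 0, f (s - c / s)) + ∫ s in Ioi 0, (c / s ^ 2) • f (s - c / s)) := by
        rw [hswap, ← two_smul ℝ, smul_smul, inv_mul_cancel₀ two_ne_zero, one_smul]
    _ = (2 : ℝ)⁻¹ • ∫ x, f x := by
        rw [← integral_add h₁ h₂, ← hh_integral]
        simp only [h, add_smul, one_smul]

end Glasser

theorem integral_Ioi_gaussDensity_mul_exp {a b : ℝ} (ha : 0 < a) (hb : 0 < b) :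
    ∫ r in Ioi 0, gaussDensity r a 0 * exp (-(b ^ 2 / 2) * r) = exp (-(a * b)) / b := by
  have hsq : ∀ s ∈ Ioi (0 : ℝ), ((2 : ℝ) * s ^ ((2 : ℝ) - 1)) •
      (gaussDensity (s ^ (2 : ℝ)) a 0 * exp (-(b ^ 2 / 2) * s ^ (2 : ℝ))) =
      (2 * exp (-(a * b)) / √(2 * π)) * exp (-(b ^ 2 / 2) * (s - a / b / s) ^ 2) := by
    intro s (hs : 0 < s)
    have hsqrt : √(2 * π * s ^ 2) = √(2 * π) * s := by
      rw [sqrt_mul (by positivity), sqrt_sq hs.le]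
    have hexp : -(a - 0) ^ 2 / (2 * s ^ 2) + -(b ^ 2 / 2) * s ^ 2 =
        -(a * b) + -(b ^ 2 / 2) * (s - a / b / s) ^ 2 := by
      field_simp
      ring
    norm_num only [rpow_two, rpow_one, smul_eq_mul, gaussDensity]
    rw [hsqrt, div_mul_eq_mul_div, ← exp_add, hexp, exp_add]
    field_simp
  have hgauss : Integrable fun x : ℝ => exp (-(b ^ 2 / 2) * x ^ 2) :=
    integrable_exp_neg_mul_sq (by positivity)
  rw [← integral_comp_rpow_Ioi_of_pos two_pos, setIntegral_congr_fun measurableSet_Ioi hsq,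
    integral_const_mul, integral_Ioi_comp_sub_div_of_even (div_pos ha hb) hgauss (by simp),
    integral_gaussian, smul_eq_mul, div_div_eq_mul_div, sqrt_div' _ (sq_nonneg b), sqrt_sq hb.le,
    mul_comm π 2]
  field_simp

theorem stmt_4 (lam z : ℝ) (hlam : 0 < lam) (hz : 0 < z) (y : ℝ) (hy : 0 ≤ y) :
    lam * ∫ r in Set.Ioi (0 : ℝ),
        Real.exp (-(y ^ 2 + 2 * y * z) / (2 * r)) * gaussDensity r z (lam * r) =
      Real.exp (-lam * y) := by
  have htilt : ∀ r ∈ Ioi (0 : ℝ),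
      exp (-(y ^ 2 + 2 * y * z) / (2 * r)) * gaussDensity r z (lam * r) =
        exp (lam * z) * (gaussDensity r (y + z) 0 * exp (-(lam ^ 2 / 2) * r)) := by
    intro r (hr : 0 < r)
    simp only [gaussDensity, mul_div_assoc', div_mul_eq_mul_div, ← exp_add]
    congr 2
    field_simp
    ring
  rw [setIntegral_congr_fun measurableSet_Ioi htilt, integral_const_mul,
    integral_Ioi_gaussDensity_mul_exp (by linarith) hlam]
  field_simp
  rw [← exp_add]
  congr 1
  ring
end

section
/- Let λ > 0, z > 0 and x ≥ z. Then 1 − λ·∫_0^∞ exp(−2x(x−z)/r)·p(r, z, λr) dr = 1 − exp(−2λ(x−z)), i.e. λ·∫_0^∞ exp(−2x(x−z)/r)·p(r,z,λr) dr = exp(−2λ(x−z)). -/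
open MeasureTheory Real

/-!
Completing the square gives
`exp (-2x(x-z)/r) p(r, z, λr) = exp (-2λ(x-z)) p(r, 2x-z, λr)`,
so it suffices that `λ ∫₀^∞ p(r, y, λr) dr = 1` for `y > 0`. The substitution
`u = λ√r - y/√r` turns `(λ + y/r) p(r, y, λr) dr` into `2 φ(u) du` with `φ` the standard
normal density, so `∫ (λ + y/r) p = 2`; the involution `r ↦ (y/λ)²/r` preserves
`(y - λr)²/r` and exchanges the two summands `λ p` and `(y/r) p`, so each of them
integrates to `1`.
-/

open Set ProbabilityTheory

theorem integral_Ioi_comp_div_smul {E : Type*} [NormedAddCommGroup E] [NormedSpace ℝ E]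
    {c : ℝ} (hc : 0 < c) (f : ℝ → E) :
    ∫ r in Ioi (0 : ℝ), (c / r ^ 2) • f (c / r) = ∫ r in Ioi (0 : ℝ), f r := by
  have hderiv : ∀ r ∈ Ioi (0 : ℝ), HasDerivWithinAt (c / ·) (-(c / r ^ 2)) (Ioi 0) r :=
    fun r hr => by
      simpa [div_eq_mul_inv] using ((hasDerivAt_inv (ne_of_gt hr)).const_mul c).hasDerivWithinAt
  have hinvol : ∀ r : ℝ, c / (c / r) = r := fun r => div_div_cancel₀ hc.ne'
  have hinj : InjOn (c / ·) (Ioi (0 : ℝ)) := fun a _ b _ h => by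
    rw [← hinvol a, ← hinvol b]; exact congrArg (c / ·) h
  have himage : (c / ·) '' Ioi (0 : ℝ) = Ioi 0 :=
    Subset.antisymm (image_subset_iff.2 fun r hr => div_pos hc hr)
      fun r hr => ⟨c / r, div_pos hc hr, hinvol r⟩
  have h := integral_image_eq_integral_abs_deriv_smul measurableSet_Ioi hderiv hinj f
  rw [himage] at h
  rw [h]
  refine setIntegral_congr_fun measurableSet_Ioi fun r hr => ?_
  rw [abs_neg, abs_of_pos (div_pos hc (pow_pos hr 2))]

noncomputable def driftScore (lam y r : ℝ) : ℝ := lam * √r - y / √r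

section
variable {lam y : ℝ}

theorem hasDerivAt_driftScore {r : ℝ} (hr : 0 < r) :
    HasDerivAt (driftScore lam y) ((lam + y / r) / (2 * √r)) r := by
  have hs : √r ≠ 0 := (sqrt_pos.2 hr).ne'
  have h := hasDerivAt_sqrt hr.ne'
  refine ((h.const_mul lam).sub ((hasDerivAt_const r y).div h hs)).congr_deriv ?_
  field_simp
  rw [sq_sqrt hr.le]
  ring

theorem strictMonoOn_driftScore (hlam : 0 < lam) (hy : 0 < y) :
    StrictMonoOn (driftScore lam y) (Ioi 0) := fun a ha b _ hab => by
  have hsa : 0 < √a := sqrt_pos.2 ha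
  have hs : √a < √b := sqrt_lt_sqrt (le_of_lt ha) hab
  have h1 : lam * √a < lam * √b := mul_lt_mul_of_pos_left hs hlam
  have h2 : y / √b < y / √a := div_lt_div_of_pos_left hy hsa hs
  unfold driftScore
  linarith

theorem driftScore_image_Ioi (hlam : 0 < lam) (hy : 0 < y) :
    driftScore lam y '' Ioi 0 = univ := by
  refine eq_univ_of_forall fun u => ?_
  -- `√r` is the positive root `t` of `lam * t ^ 2 - u * t - y = 0`
  set s := √(u ^ 2 + 4 * lam * y)
  have hs2 : s ^ 2 = u ^ 2 + 4 * lam * y := sq_sqrt (by positivity)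
  have hus : -u < s := by nlinarith [sqrt_nonneg (u ^ 2 + 4 * lam * y)]
  set t := (u + s) / (2 * lam)
  have ht : 0 < t := div_pos (by linarith) (by positivity)
  have hroot : lam * t ^ 2 - u * t - y = 0 := by
    simp only [t]; field_simp; linear_combination hs2
  refine ⟨t ^ 2, pow_pos ht 2, ?_⟩
  simp only [driftScore, sqrt_sq ht.le]
  field_simp
  linear_combination hroot

theorem abs_deriv_mul_gaussianPDFReal_driftScore (hlam : 0 ≤ lam) (hy : 0 ≤ y) {r : ℝ}
    (hr : 0 < r) :
    |(lam + y / r) / (2 * √r)| * gaussianPDFReal 0 1 (driftScore lam y r) =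
      (lam + y / r) / 2 * gaussDensity r y (lam * r) := by
  have hs : 0 < √r := sqrt_pos.2 hr
  have hexp : -(lam * √r - y / √r) ^ 2 / 2 = -(y - lam * r) ^ 2 / (2 * r) := by
    field_simp
    rw [sq_sqrt hr.le]
    ring
  rw [abs_of_nonneg (by positivity), gaussianPDFReal, gaussDensity, driftScore,
    sqrt_mul (by positivity) r, NNReal.coe_one, mul_one, mul_one, sub_zero, hexp]
  field_simp

theorem integrableOn_drift_add_div_mul_gaussDensity (hlam : 0 < lam) (hy : 0 < y) :
    IntegrableOn (fun r => (lam + y / r) * gaussDensity r y (lam * r)) (Ioi 0) := by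
  have h := (integrableOn_image_iff_integrableOn_abs_deriv_smul measurableSet_Ioi
    (fun r hr => (hasDerivAt_driftScore hr).hasDerivWithinAt)
    (strictMonoOn_driftScore hlam hy).injOn (gaussianPDFReal 0 1)).1
  rw [driftScore_image_Ioi hlam hy] at h
  refine IntegrableOn.congr_fun ((h (integrable_gaussianPDFReal 0 1).integrableOn).const_mul 2)
    (fun r hr => ?_) measurableSet_Ioi
  rw [smul_eq_mul, abs_deriv_mul_gaussianPDFReal_driftScore hlam.le hy.le hr]
  ring

theorem integral_drift_add_div_mul_gaussDensity (hlam : 0 < lam) (hy : 0 < y) :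
    ∫ r in Ioi 0, (lam + y / r) * gaussDensity r y (lam * r) = 2 := by
  have h := integral_image_eq_integral_abs_deriv_smul measurableSet_Ioi
    (fun r hr => (hasDerivAt_driftScore hr).hasDerivWithinAt)
    (strictMonoOn_driftScore hlam hy).injOn (gaussianPDFReal 0 1)
  rw [driftScore_image_Ioi hlam hy, Measure.restrict_univ,
    integral_gaussianPDFReal_eq_one 0 one_ne_zero] at h
  calc ∫ r in Ioi 0, (lam + y / r) * gaussDensity r y (lam * r)
      = ∫ r in Ioi 0,
          2 * (|(lam + y / r) / (2 * √r)| • gaussianPDFReal 0 1 (driftScore lam y r)) :=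
        setIntegral_congr_fun measurableSet_Ioi fun r hr => by
          rw [smul_eq_mul, abs_deriv_mul_gaussianPDFReal_driftScore hlam.le hy.le hr]
          ring
    _ = 2 := by rw [integral_const_mul, ← h, mul_one]

theorem div_mul_gaussDensity_comp_reciprocal (hlam : 0 < lam) (hy : 0 < y) {r : ℝ}
    (hr : 0 < r) :
    ((y / lam) ^ 2 / r ^ 2) * (y / ((y / lam) ^ 2 / r) *
      gaussDensity ((y / lam) ^ 2 / r) y (lam * ((y / lam) ^ 2 / r))) =
      lam * gaussDensity r y (lam * r) := by
  have hsqrt : √(2 * π * ((y / lam) ^ 2 / r)) = √(2 * π * r) * (y / (lam * r)) := by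
    rw [← sqrt_sq (by positivity : 0 ≤ y / (lam * r)), ← sqrt_mul (by positivity)]
    congr 1
    field_simp
  rw [gaussDensity, gaussDensity, hsqrt]
  have hexp : -(y - lam * ((y / lam) ^ 2 / r)) ^ 2 / (2 * ((y / lam) ^ 2 / r)) =
      -(y - lam * r) ^ 2 / (2 * r) := by
    field_simp
    ring
  rw [hexp]
  have : 0 < √(2 * π * r) := by positivity
  field_simp

theorem integral_div_mul_gaussDensity (hlam : 0 < lam) (hy : 0 < y) :
    ∫ r in Ioi 0, y / r * gaussDensity r y (lam * r) =
      ∫ r in Ioi 0, lam * gaussDensity r y (lam * r) := by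
  rw [← integral_Ioi_comp_div_smul (pow_pos (div_pos hy hlam) 2)]
  exact setIntegral_congr_fun measurableSet_Ioi fun r hr =>
    div_mul_gaussDensity_comp_reciprocal hlam hy hr

theorem mul_integral_gaussDensity_eq_one (hlam : 0 < lam) (hy : 0 < y) :
    lam * ∫ r in Ioi 0, gaussDensity r y (lam * r) = 1 := by
  have hsum := integrableOn_drift_add_div_mul_gaussDensity hlam hy
  have hmeas : Measurable fun r => gaussDensity r y (lam * r) := by
    unfold gaussDensity; fun_prop
  have hint : IntegrableOn (fun r => lam * gaussDensity r y (lam * r)) (Ioi 0) := by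
    refine hsum.mono' (hmeas.const_mul lam).aestronglyMeasurable ?_
    filter_upwards [self_mem_ae_restrict measurableSet_Ioi] with r hr
    have hp : 0 ≤ gaussDensity r y (lam * r) := by unfold gaussDensity; positivity
    have hyr : 0 ≤ y / r * gaussDensity r y (lam * r) := by
      have : 0 < r := hr
      positivity
    rw [norm_of_nonneg (by positivity)]
    linarith
  have hint' : IntegrableOn (fun r => y / r * gaussDensity r y (lam * r)) (Ioi 0) :=
    (hsum.sub hint).congr_fun (fun r _ => by simp only [Pi.sub_apply]; ring) measurableSet_Ioi
  have h := integral_drift_add_div_mul_gaussDensity hlam hy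
  simp only [add_mul] at h
  rw [integral_add hint hint', integral_div_mul_gaussDensity hlam hy] at h
  rw [← integral_const_mul]
  linarith
end

theorem exp_mul_gaussDensity_reflect (lam z x r : ℝ) :
    exp (-(2 * x * (x - z)) / r) * gaussDensity r z (lam * r) =
      exp (-(2 * lam * (x - z))) * gaussDensity r (2 * x - z) (lam * r) := by
  rcases eq_or_ne r 0 with rfl | hr
  · -- both densities are junk `_ / √0 = 0`
    simp [gaussDensity]
  rw [gaussDensity, gaussDensity, ← mul_div_assoc, ← mul_div_assoc, ← exp_add, ← exp_add]
  congr 2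
  field_simp
  ring

theorem stmt_5 (lam z x : ℝ) (hlam : 0 < lam) (hz : 0 < z) (hx : z ≤ x) :
    lam * ∫ r in Set.Ioi (0 : ℝ),
        Real.exp (-(2 * x * (x - z)) / r) * gaussDensity r z (lam * r) =
      Real.exp (-(2 * lam * (x - z))) := by
  simp_rw [exp_mul_gaussDensity_reflect lam z x, integral_const_mul]
  rw [mul_left_comm, mul_integral_gaussDensity_eq_one hlam (by linarith), mul_one]
end

section
/- For λ > 0, t > 0 and s ∈ [0,t), and any real x, the integral ∫_s^t p(r−s, x, λ(r−s)) dr equals (1/λ)·[exp(−λ(|x|−x))·Φ(λ√(t−s) − |x|/√(t−s)) − exp(λ(|x|+x))·Φ(−λ√(t−s) − |x|/√(t−s))], where Φ is the standard normal CDF and p(u, x, m) = (2πu)^{-1/2}·exp(−(x−m)²/(2u)). -/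
open MeasureTheory Real intervalIntegral

/-- Standard normal cumulative distribution function. -/
noncomputable def Phi (x : ℝ) : ℝ :=
  ∫ u in Set.Iic x, Real.exp (-u ^ 2 / 2) / Real.sqrt (2 * Real.pi)
/-! The right-hand side, as a function `F` of `u = t - s`, is a primitive of `u ↦ p(u, x, λu)`.
Writing `q = √u` and completing the square, both products `exp(-λα(x)) φ(λq - |x|/q)` and
`exp(λγ(x)) φ(-λq - |x|/q)` equal `q · p(q², x, λq²)`, so the chain rule gives
`F' = (1/λ) · p · ((λ + |x|/u) - (-λ + |x|/u)) / 2 = p`. As `u → 0⁺`, `F(u) → 0` (both arguments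
of `Φ` tend to `-∞`, or to `0` if `x = 0`), and the fundamental theorem of calculus applies on
`(0, t - s]`, the integrand being nonnegative hence integrable. -/

open Filter Set Topology

lemma integral_eq_sub_of_hasDerivAt_of_nonneg_of_tendsto {f f' : ℝ → ℝ} {a b fa : ℝ}
    (hab : a < b) (hderiv : ∀ y ∈ Ioc a b, HasDerivAt f (f' y) y)
    (hnonneg : ∀ y ∈ Ioo a b, 0 ≤ f' y) (ha : Tendsto f (𝓝[>] a) (𝓝 fa)) :
    ∫ y in a..b, f' y = f b - fa := by
  classical
  set g := Function.update f a fa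
  have hg : ∀ y ∈ Ioc a b, g y = f y := fun y hy => Function.update_of_ne hy.1.ne' _ _
  have hgderiv : ∀ y ∈ Ioo a b, HasDerivAt g (f' y) y := fun y hy =>
    (hderiv y (Ioo_subset_Ioc_self hy)).congr_of_eventuallyEq
      (eventually_of_mem (Ioo_mem_nhds hy.1 hy.2) fun z hz => hg z (Ioo_subset_Ioc_self hz))
  have hcont : ContinuousOn g (Icc a b) := by
    rw [continuousOn_update_iff, Icc_sdiff_left]
    refine ⟨fun y hy => (hderiv y hy).continuousAt.continuousWithinAt, fun _ => ?_⟩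
    exact ha.mono_left (nhdsWithin_mono _ Ioc_subset_Ioi_self)
  have hint := integrableOn_deriv_of_nonneg hcont hgderiv hnonneg
  rw [integral_eq_sub_of_hasDerivAt_of_le hab.le hcont hgderiv
    ((intervalIntegrable_iff_integrableOn_Ioc_of_le hab.le).2 hint), hg b ⟨hab, le_rfl⟩]
  simp [g]

noncomputable def phi (u : ℝ) : ℝ := Real.exp (-u ^ 2 / 2) / Real.sqrt (2 * Real.pi)

lemma phi_neg (u : ℝ) : phi (-u) = phi u := by
  simp [phi]

lemma continuous_phi : Continuous phi := by
  unfold phi; fun_prop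

lemma integrable_phi : Integrable phi := by
  convert ProbabilityTheory.integrable_gaussianPDFReal 0 1 using 1
  ext u
  simp [phi, ProbabilityTheory.gaussianPDFReal, div_eq_inv_mul]

lemma Phi_sub_Phi (a b : ℝ) : Phi b - Phi a = ∫ u in a..b, phi u :=
  integral_Iic_sub_Iic integrable_phi.integrableOn integrable_phi.integrableOn

lemma hasDerivAt_Phi (y : ℝ) : HasDerivAt Phi (phi y) y := by
  have hPhi : Phi = fun z => Phi 0 + ∫ u in (0 : ℝ)..z, phi u := by
    ext z; rw [← Phi_sub_Phi]; ring
  rw [hPhi]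
  exact ((continuous_phi.integral_hasStrictDerivAt 0 y).hasDerivAt).const_add _

lemma continuous_Phi : Continuous Phi :=
  continuous_iff_continuousAt.2 fun y => (hasDerivAt_Phi y).continuousAt

lemma tendsto_Phi_atBot : Tendsto Phi atBot (𝓝 0) := by
  have h := intervalIntegral_tendsto_integral_Iic 0 integrable_phi.integrableOn tendsto_id
  have hPhi : Phi = fun y => Phi 0 - ∫ u in y..0, phi u := by
    ext y; rw [← Phi_sub_Phi]; ring
  rw [hPhi]
  simpa [Phi, phi] using (tendsto_const_nhds (x := Phi 0)).sub h

lemma exp_mul_phi_eq (lam x a q : ℝ) (ha : a ^ 2 = x ^ 2) (hq : 0 < q) :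
    Real.exp (-lam * (a - x)) * phi (lam * q - a / q) =
      q * gaussDensity (q ^ 2) x (lam * q ^ 2) := by
  have hexp :
      -lam * (a - x) + -(lam * q - a / q) ^ 2 / 2 = -(x - lam * q ^ 2) ^ 2 / (2 * q ^ 2) := by
    field_simp
    linear_combination (-1 : ℝ) * ha
  have hsqrt : Real.sqrt (2 * Real.pi * q ^ 2) = Real.sqrt (2 * Real.pi) * q := by
    rw [Real.sqrt_mul (by positivity), Real.sqrt_sq hq.le]
  rw [phi, gaussDensity, hsqrt, mul_div_assoc', ← Real.exp_add, hexp]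
  field_simp

-- At `u = 0` this takes the junk value given by `√0 = 0` and `|x| / 0 = 0`, not its limit `0`.
noncomputable def driftPrimitive (lam x u : ℝ) : ℝ :=
  (1 / lam) *
    (Real.exp (-lam * (|x| - x)) * Phi (lam * Real.sqrt u - |x| / Real.sqrt u)
      - Real.exp (lam * (|x| + x)) * Phi (-(lam * Real.sqrt u) - |x| / Real.sqrt u))

lemma hasDerivAt_driftPrimitive {lam u : ℝ} (x : ℝ) (hlam : lam ≠ 0) (hu : 0 < u) :
    HasDerivAt (driftPrimitive lam x) (gaussDensity u x (lam * u)) u := by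
  set q := Real.sqrt u with hq_def
  have hq : 0 < q := Real.sqrt_pos.2 hu
  have hqu : q ^ 2 = u := Real.sq_sqrt hu.le
  have hsqrt : HasDerivAt Real.sqrt (1 / (2 * q)) u := Real.hasDerivAt_sqrt hu.ne'
  have hdiv_sqrt : HasDerivAt (fun v => |x| / Real.sqrt v) (-(|x| / (2 * q ^ 3))) u := by
    refine ((hasDerivAt_const u |x|).div hsqrt hq.ne').congr_deriv ?_
    rw [← hq_def]
    field_simp
    ring
  have h₁ := (hasDerivAt_Phi _).comp u ((hsqrt.const_mul lam).sub hdiv_sqrt)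
  have h₂ := (hasDerivAt_Phi _).comp u ((hsqrt.const_mul lam).neg.sub hdiv_sqrt)
  have hφ₁ := exp_mul_phi_eq lam x |x| q (sq_abs x) hq
  have hφ₂ : Real.exp (lam * (|x| + x)) * phi (-(lam * q) - |x| / q) =
      q * gaussDensity (q ^ 2) x (lam * q ^ 2) := by
    rw [← exp_mul_phi_eq lam x (-|x|) q (by rw [neg_sq, sq_abs]) hq, ← phi_neg]
    ring_nf
  refine (((h₁.const_mul _).sub (h₂.const_mul _)).const_mul (1 / lam)).congr_deriv ?_
  rw [hqu] at hφ₁ hφ₂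
  simp only [Pi.sub_apply, Pi.neg_apply, ← hq_def]
  rw [← mul_assoc, hφ₁, ← mul_assoc, hφ₂]
  field_simp
  ring

lemma tendsto_Phi_mul_sqrt_sub_div_sqrt (c : ℝ) {a : ℝ} (ha : 0 < a) :
    Tendsto (fun u => Phi (c * Real.sqrt u - a / Real.sqrt u)) (𝓝[>] 0) (𝓝 0) := by
  have hsqrt : Tendsto Real.sqrt (𝓝[>] 0) (𝓝[>] 0) :=
    tendsto_nhdsWithin_of_tendsto_nhds_of_eventually_within _
      (by simpa using (Real.continuous_sqrt.tendsto 0).mono_left nhdsWithin_le_nhds)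
      (eventually_nhdsWithin_of_forall fun u hu => Real.sqrt_pos.2 hu)
  have hdiv : Tendsto (fun q => a / q) (𝓝[>] 0) atTop := by
    simpa [div_eq_mul_inv] using tendsto_inv_nhdsGT_zero.const_mul_atTop ha
  have hsub : Tendsto (fun q => c * q - a / q) (𝓝[>] 0) atBot := by
    have hcq : Tendsto (fun q => c * q) (𝓝[>] (0 : ℝ)) (𝓝 0) := by
      simpa using ((continuous_const_mul c).tendsto 0).mono_left nhdsWithin_le_nhds
    simpa [sub_eq_add_neg] using hcq.add_atBot (tendsto_neg_atTop_atBot.comp hdiv)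
  exact tendsto_Phi_atBot.comp (hsub.comp hsqrt)

lemma tendsto_driftPrimitive_zero (lam x : ℝ) :
    Tendsto (driftPrimitive lam x) (𝓝[>] 0) (𝓝 0) := by
  unfold driftPrimitive
  rcases eq_or_ne x 0 with rfl | hx
  · have hcont : Continuous fun u =>
        (1 / lam) * (Phi (lam * Real.sqrt u) - Phi (-(lam * Real.sqrt u))) := by
      have := continuous_Phi; fun_prop
    simpa using (hcont.tendsto 0).mono_left nhdsWithin_le_nhds
  · have h₁ := tendsto_Phi_mul_sqrt_sub_div_sqrt lam (abs_pos.2 hx)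
    have h₂ := tendsto_Phi_mul_sqrt_sub_div_sqrt (-lam) (abs_pos.2 hx)
    simp only [neg_mul] at h₂
    simpa using ((h₁.const_mul (Real.exp (-lam * (|x| - x)))).sub
      (h₂.const_mul (Real.exp (lam * (|x| + x))))).const_mul (1 / lam)

lemma gaussDensity_nonneg (t x m : ℝ) : 0 ≤ gaussDensity t x m := by
  unfold gaussDensity; positivity

lemma integral_gaussDensity_drift {lam T : ℝ} (x : ℝ) (hlam : lam ≠ 0) (hT : 0 < T) :
    ∫ u in (0 : ℝ)..T, gaussDensity u x (lam * u) = driftPrimitive lam x T := by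
  rw [integral_eq_sub_of_hasDerivAt_of_nonneg_of_tendsto hT
    (fun u hu => hasDerivAt_driftPrimitive x hlam hu.1) (fun _ _ => gaussDensity_nonneg _ _ _)
    (tendsto_driftPrimitive_zero lam x), sub_zero]

theorem stmt_6_general (lam t s x : ℝ) (hlam : 0 < lam) (hst : s < t) :
    ∫ r in s..t, gaussDensity (r - s) x (lam * (r - s)) =
      (1 / lam) *
        (Real.exp (-lam * (|x| - x)) *
            Phi (lam * Real.sqrt (t - s) - |x| / Real.sqrt (t - s))
          - Real.exp (lam * (|x| + x)) *
            Phi (-(lam * Real.sqrt (t - s)) - |x| / Real.sqrt (t - s))) := by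
  rw [intervalIntegral.integral_comp_sub_right (fun u => gaussDensity u x (lam * u)), sub_self]
  exact integral_gaussDensity_drift x hlam.ne' (sub_pos.2 hst)

theorem stmt_6 (lam t s x : ℝ) (hlam : 0 < lam) (ht : 0 < t) (hs : 0 ≤ s) (hst : s < t) :
    ∫ r in s..t, gaussDensity (r - s) x (lam * (r - s)) =
      (1 / lam) *
        (Real.exp (-lam * (|x| - x)) *
            Phi (lam * Real.sqrt (t - s) - |x| / Real.sqrt (t - s))
          - Real.exp (lam * (|x| + x)) *
            Phi (-(lam * Real.sqrt (t - s)) - |x| / Real.sqrt (t - s))) :=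
  stmt_6_general lam t s x hlam hst
end

section
/- Fix λ > 0, z > 0, t > 0 and let f(x) = exp(−λ|x−z|). Then for x ≠ z, ∫_ℝ f(y)·exp(−λ(|z−y|−(z−y)))·p(t, y−x, λt) dy = exp((3/2)λ²t + λ(x−z))·[Φ((z−x)/√t − 2λ√t) + exp(−4λ(x−z))·Φ(−(z−x)/√t − 2λ√t)], where p(t, w, m) = (2πt)^{-1/2} exp(−(w−m)²/(2t)). -/
/-!
On `y ≤ z` the weight `exp (-λ|y - z|) exp (-λ α(z, y))` equals `exp (λ (y - z))`, on `y > z`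
it equals `exp (-3λ (y - z))`. Multiplying a Gaussian density by `exp (a y)` only rescales it and
shifts its mean by `a t`, so each half of the integral is a Gaussian mass of a half line, i.e.
a value of `Φ`.
-/

open MeasureTheory Real

open Set

lemma setIntegral_Iic_comp_mul_add {E : Type*} [NormedAddCommGroup E] [NormedSpace ℝ E]
    (f : ℝ → E) {a : ℝ} (ha : 0 < a) (b c : ℝ) :
    ∫ u in Iic c, f (a * u + b) = a⁻¹ • ∫ x in Iic (a * c + b), f x := by
  have hmem : ∀ u, a * u + b ∈ Iic (a * c + b) ↔ u ∈ Iic c := fun u => by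
    simp only [mem_Iic, add_le_add_iff_right, mul_le_mul_iff_right₀ ha]
  calc ∫ u in Iic c, f (a * u + b)
      = ∫ u, (Iic (a * c + b)).indicator f (a * u + b) := by
        rw [← integral_indicator measurableSet_Iic]
        congr 1 with u
        by_cases hu : u ∈ Iic c
        · rw [indicator_of_mem hu, indicator_of_mem ((hmem u).2 hu)]
        · rw [indicator_of_notMem hu, indicator_of_notMem (mt (hmem u).1 hu)]
    _ = a⁻¹ • ∫ x in Iic (a * c + b), f x := by
        rw [Measure.integral_comp_mul_left (fun x => (Iic (a * c + b)).indicator f (x + b)),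
          integral_add_right_eq_self, abs_of_pos (inv_pos.mpr ha),
          integral_indicator measurableSet_Iic]

lemma gaussDensity_sub (t x y m : ℝ) : gaussDensity t (y - x) m = gaussDensity t y (x + m) := by
  rw [gaussDensity, gaussDensity, sub_sub]

lemma gaussDensity_neg (t y m : ℝ) : gaussDensity t (-y) m = gaussDensity t y (-m) := by
  rw [gaussDensity, gaussDensity, ← neg_add', neg_sq, sub_neg_eq_add]

lemma Phi_eq_setIntegral_gaussDensity (d : ℝ) : Phi d = ∫ u in Iic d, gaussDensity 1 u 0 := by
  simp [Phi, gaussDensity]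

lemma gaussDensity_sqrt_mul_add {t : ℝ} (ht : 0 < t) (m u : ℝ) :
    gaussDensity t (√t * u + m) m = (√t)⁻¹ * gaussDensity 1 u 0 := by
  have hexp : -(√t * u + m - m) ^ 2 / (2 * t) = -(u - 0) ^ 2 / (2 * 1) := by
    rw [add_sub_cancel_right, mul_pow, sq_sqrt ht.le]
    field_simp
    ring
  rw [gaussDensity, gaussDensity, hexp, mul_one, sqrt_mul (by positivity)]
  field_simp

lemma setIntegral_Iic_gaussDensity {t : ℝ} (ht : 0 < t) (m c : ℝ) :
    ∫ y in Iic c, gaussDensity t y m = Phi ((c - m) / √t) := by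
  have hs : 0 < √t := sqrt_pos.mpr ht
  have key := setIntegral_Iic_comp_mul_add (gaussDensity t · m) hs m ((c - m) / √t)
  rw [mul_div_cancel₀ _ hs.ne', sub_add_cancel] at key
  simp only [gaussDensity_sqrt_mul_add ht, integral_const_mul, smul_eq_mul] at key
  rw [Phi_eq_setIntegral_gaussDensity, ← mul_left_cancel_iff_of_pos (inv_pos.mpr hs), ← key]

lemma setIntegral_Ioi_gaussDensity {t : ℝ} (ht : 0 < t) (m c : ℝ) :
    ∫ y in Ioi c, gaussDensity t y m = Phi ((m - c) / √t) := by
  rw [← neg_neg c, ← integral_comp_neg_Iic]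
  simp only [gaussDensity_neg, setIntegral_Iic_gaussDensity ht]
  ring_nf

lemma integrable_gaussDensity {t : ℝ} (ht : 0 < t) (m : ℝ) :
    Integrable (gaussDensity t · m) := by
  have h := ((integrable_exp_neg_mul_sq (b := 1 / (2 * t)) (by positivity)).comp_sub_right
    m).div_const (√(2 * π * t))
  refine h.congr (ae_of_all _ fun y => ?_)
  simp only [gaussDensity]
  congr 2
  ring

lemma exp_mul_gaussDensity {t : ℝ} (ht : 0 < t) (a m y : ℝ) :
    exp (a * y) * gaussDensity t y m =
      exp (a * m + a ^ 2 * t / 2) * gaussDensity t y (m + a * t) := by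
  rw [gaussDensity, gaussDensity, mul_div_assoc', mul_div_assoc', ← exp_add, ← exp_add]
  congr 2
  field_simp
  ring

lemma integrable_exp_mul_gaussDensity {t : ℝ} (ht : 0 < t) (a m : ℝ) :
    Integrable fun y => exp (a * y) * gaussDensity t y m := by
  simp only [exp_mul_gaussDensity ht]
  exact (integrable_gaussDensity ht _).const_mul _

lemma setIntegral_Iic_exp_mul_gaussDensity {t : ℝ} (ht : 0 < t) (a m c : ℝ) :
    ∫ y in Iic c, exp (a * y) * gaussDensity t y m =
      exp (a * m + a ^ 2 * t / 2) * Phi ((c - (m + a * t)) / √t) := by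
  simp only [exp_mul_gaussDensity ht, integral_const_mul, setIntegral_Iic_gaussDensity ht]

lemma setIntegral_Ioi_exp_mul_gaussDensity {t : ℝ} (ht : 0 < t) (a m c : ℝ) :
    ∫ y in Ioi c, exp (a * y) * gaussDensity t y m =
      exp (a * m + a ^ 2 * t / 2) * Phi ((m + a * t - c) / √t) := by
  simp only [exp_mul_gaussDensity ht, integral_const_mul, setIntegral_Ioi_gaussDensity ht]

lemma exp_neg_mul_abs_mul_exp_eq_of_le (lam : ℝ) {y z : ℝ} (h : y ≤ z) :
    exp (-lam * |y - z|) * exp (-lam * (|z - y| - (z - y))) =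
      exp (-(lam * z)) * exp (lam * y) := by
  rw [abs_of_nonpos (sub_nonpos.mpr h), abs_of_nonneg (sub_nonneg.mpr h), ← exp_add, ← exp_add]
  ring_nf

lemma exp_neg_mul_abs_mul_exp_eq_of_lt (lam : ℝ) {y z : ℝ} (h : z < y) :
    exp (-lam * |y - z|) * exp (-lam * (|z - y| - (z - y))) =
      exp (3 * lam * z) * exp (-(3 * lam) * y) := by
  rw [abs_of_pos (sub_pos.mpr h), abs_of_neg (sub_neg.mpr h), ← exp_add, ← exp_add]
  ring_nf

lemma integral_exp_neg_mul_abs_mul_exp_mul_gaussDensity {t : ℝ} (ht : 0 < t) (lam z m : ℝ) :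
    ∫ y, exp (-lam * |y - z|) * exp (-lam * (|z - y| - (z - y))) * gaussDensity t y m =
      exp (-(lam * z)) * (exp (lam * m + lam ^ 2 * t / 2) * Phi ((z - (m + lam * t)) / √t)) +
        exp (3 * lam * z) * (exp (-(3 * lam) * m + (-(3 * lam)) ^ 2 * t / 2) *
          Phi ((m + -(3 * lam) * t - z) / √t)) := by
  set F := fun y => exp (-lam * |y - z|) * exp (-lam * (|z - y| - (z - y))) * gaussDensity t y m
  have hleft : EqOn F (fun y => exp (-(lam * z)) * (exp (lam * y) * gaussDensity t y m))
      (Iic z) := fun y hy => by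
    simp only [F]
    rw [exp_neg_mul_abs_mul_exp_eq_of_le lam hy, mul_assoc]
  have hright : EqOn F (fun y => exp (3 * lam * z) * (exp (-(3 * lam) * y) * gaussDensity t y m))
      (Ioi z) := fun y hy => by
    simp only [F]
    rw [exp_neg_mul_abs_mul_exp_eq_of_lt lam hy, mul_assoc]
  rw [← intervalIntegral.integral_Iic_add_Ioi
      ((((integrable_exp_mul_gaussDensity ht _ _).const_mul _).integrableOn).congr_fun
        hleft.symm measurableSet_Iic)
      ((((integrable_exp_mul_gaussDensity ht _ _).const_mul _).integrableOn).congr_fun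
        hright.symm measurableSet_Ioi),
    setIntegral_congr_fun measurableSet_Iic hleft, setIntegral_congr_fun measurableSet_Ioi hright,
    integral_const_mul, integral_const_mul, setIntegral_Iic_exp_mul_gaussDensity ht,
    setIntegral_Ioi_exp_mul_gaussDensity ht]

theorem stmt_14_general (lam z t x : ℝ) (ht : 0 < t) :
    ∫ y : ℝ,
        Real.exp (-lam * |y - z|) * Real.exp (-lam * (|z - y| - (z - y))) *
          gaussDensity t (y - x) (lam * t) =
      Real.exp ((3 / 2) * lam ^ 2 * t + lam * (x - z)) *
        (Phi ((z - x) / Real.sqrt t - 2 * lam * Real.sqrt t)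
          + Real.exp (-(4 * lam * (x - z))) *
            Phi (-((z - x) / Real.sqrt t) - 2 * lam * Real.sqrt t)) := by
  simp only [gaussDensity_sub]
  rw [integral_exp_neg_mul_abs_mul_exp_mul_gaussDensity ht]
  have e1 : exp (-(lam * z)) * exp (lam * (x + lam * t) + lam ^ 2 * t / 2) =
      exp (3 / 2 * lam ^ 2 * t + lam * (x - z)) := by
    rw [← exp_add]; ring_nf
  have e2 : exp (3 * lam * z) * exp (-(3 * lam) * (x + lam * t) + (-(3 * lam)) ^ 2 * t / 2) =
      exp (3 / 2 * lam ^ 2 * t + lam * (x - z)) * exp (-(4 * lam * (x - z))) := by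
    rw [← exp_add, ← exp_add]; ring_nf
  have hsqrt : t / √t = √t := div_sqrt
  have u1 : (z - (x + lam * t + lam * t)) / √t = (z - x) / √t - 2 * lam * √t := by
    linear_combination (-2 * lam) * hsqrt
  have u2 : (x + lam * t + -(3 * lam) * t - z) / √t = -((z - x) / √t) - 2 * lam * √t := by
    linear_combination (-2 * lam) * hsqrt
  rw [u1, u2]
  linear_combination Phi ((z - x) / √t - 2 * lam * √t) * e1 +
    Phi (-((z - x) / √t) - 2 * lam * √t) * e2

theorem stmt_14 (lam z t x : ℝ) (hlam : 0 < lam) (hz : 0 < z) (ht : 0 < t) (hx : x ≠ z) :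
    ∫ y : ℝ,
        Real.exp (-lam * |y - z|) * Real.exp (-lam * (|z - y| - (z - y))) *
          gaussDensity t (y - x) (lam * t) =
      Real.exp ((3 / 2) * lam ^ 2 * t + lam * (x - z)) *
        (Phi ((z - x) / Real.sqrt t - 2 * lam * Real.sqrt t)
          + Real.exp (-(4 * lam * (x - z))) *
            Phi (-((z - x) / Real.sqrt t) - 2 * lam * Real.sqrt t)) :=
  stmt_14_general lam z t x ht
end
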